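/- arXiv:1504.00783 — 4 statements merged into one kernel-verified Lean document; each statement's English description precedes it below -/
import Mathlib

section
/- Let Δ ∈ ℂ and let H be the open XXZ Hamiltonian on (ℂ²)^{⊗n}. Then: (a) for n ≥ 2, σ⁺₂ = (1/4)·σᶻ₁·[σ⁺₁, [H, σᶻ₁]]; (b) for n ≥ 3 and every x with 3 ≤ x ≤ n, σ⁺ₓ = −σ⁺_{x−2} − (1/2)·σᶻ_{x−1}·[σ⁻_{x−1}, σ⁺_{x−1} H σ⁺_{x−1}]. -/
open Matrix

noncomputable section

abbrev M2 : Type := Matrix (Fin 2) (Fin 2) ℂ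

/-- Pauli matrices and raising/lowering operators. -/
def σx : M2 := !![0, 1; 1, 0]
def σy : M2 := !![0, -Complex.I; Complex.I, 0]
def σz : M2 := !![1, 0; 0, -1]
def σ0 : M2 := 1
def σp : M2 := (1/2 : ℂ) • (σx + Complex.I • σy)
def σm : M2 := (1/2 : ℂ) • (σx - Complex.I • σy)

/-- Operators on the spin chain `(ℂ²)^{⊗n}`. -/
abbrev ChainOp (n : ℕ) : Type := Matrix (Fin n → Fin 2) (Fin n → Fin 2) ℂ

/-- A single-site operator `a` acting at site `x` (identity elsewhere). -/
def site {n : ℕ} (x : Fin n) (a : M2) : ChainOp n :=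
  Matrix.of fun i j =>
    a (i x) (j x) * ∏ y ∈ Finset.univ.filter (fun y => y ≠ x), (if i y = j y then (1:ℂ) else 0)

/-- The open XXZ Hamiltonian `H = Σ_{x=1}^{n-1} h_{x,x+1}` with anisotropy `Δ`. -/
def XXZ (Δ : ℂ) (n : ℕ) : ChainOp n :=
  ∑ x : Fin n,
    if h : (x : ℕ) + 1 < n then
      (2:ℂ) • (site x σp * site ⟨(x:ℕ)+1, h⟩ σm) + (2:ℂ) • (site x σm * site ⟨(x:ℕ)+1, h⟩ σp)
        + Δ • (site x σz * site ⟨(x:ℕ)+1, h⟩ σz)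
    else 0

/-
The proof is a direct computation with single-site operators. Operators on different sites
commute and operators on the same site multiply as 2×2 matrices, so in both identities every
bond of `H` that does not touch the site being probed drops out: in (a) because it commutes
with `σᶻ₁`, in (b) because `σ⁺ σ⁺ = 0`. What remains is one bond in (a), two bonds in (b),
and the single-site algebra `[σ⁺, σ⁻] = σᶻ`, `(σᶻ)² = 1`, `σ⁺ σ⁻ σ⁺ = σ⁺`, `σ⁺ σᶻ σ⁺ = 0`
finishes the computation.
-/

section PureTensor

variable {ι m R : Type*} [Fintype ι] [CommSemiring R]

/-- The Kronecker product `⨂ y, f y` of a family of square matrices. -/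
def pureTensor (f : ι → Matrix m m R) : Matrix (ι → m) (ι → m) R :=
  Matrix.of fun i j => ∏ y, f y (i y) (j y)

theorem pureTensor_mul [DecidableEq ι] [Fintype m] (f g : ι → Matrix m m R) :
    pureTensor f * pureTensor g = pureTensor (f * g) := by
  ext i j
  simp only [pureTensor, of_apply, mul_apply, Pi.mul_apply, ← Finset.prod_mul_distrib]
  rw [Fintype.prod_sum fun y v => f y (i y) v * g y v (j y)]

theorem pureTensor_one [DecidableEq m] : pureTensor (1 : ι → Matrix m m R) = 1 := by
  ext i j
  simp [pureTensor, one_apply, Finset.prod_boole, funext_iff]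

theorem Commute.pureTensor [DecidableEq ι] [Fintype m] {f g : ι → Matrix m m R}
    (h : Commute f g) :
    Commute (pureTensor f) (pureTensor g) := by
  rw [Commute, SemiconjBy, pureTensor_mul, pureTensor_mul, h.eq]

end PureTensor

section Site

variable {n : ℕ}

theorem site_eq_pureTensor (x : Fin n) (a : M2) : site x a = pureTensor (Pi.mulSingle x a) := by
  ext i j
  simp only [site, pureTensor, of_apply]
  rw [← Finset.mul_prod_erase Finset.univ _ (Finset.mem_univ x), ← Finset.filter_ne',
    Pi.mulSingle_eq_same]
  congr 1
  refine Finset.prod_congr rfl fun y hy => ?_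
  rw [Pi.mulSingle_eq_of_ne (Finset.mem_filter.mp hy).2, one_apply]

theorem site_mul_site (x : Fin n) (a b : M2) : site x a * site x b = site x (a * b) := by
  rw [site_eq_pureTensor, site_eq_pureTensor, site_eq_pureTensor, pureTensor_mul,
    Pi.mulSingle_mul]

theorem site_one (x : Fin n) : site x 1 = 1 := by
  rw [site_eq_pureTensor, Pi.mulSingle_one, pureTensor_one]

theorem site_commute {x y : Fin n} (h : x ≠ y) (a b : M2) : Commute (site x a) (site y b) := by
  rw [site_eq_pureTensor, site_eq_pureTensor]
  exact (Pi.mulSingle_commute (f := fun _ => M2) h a b).pureTensor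

theorem site_zero (x : Fin n) : site x 0 = 0 := by
  ext i j; simp [site]

theorem site_sub (x : Fin n) (a b : M2) : site x (a - b) = site x a - site x b := by
  ext i j; simp [site, sub_mul]

theorem site_neg (x : Fin n) (a : M2) : site x (-a) = -site x a := by
  ext i j; simp [site]

theorem site_smul (x : Fin n) (c : ℂ) (a : M2) : site x (c • a) = c • site x a := by
  ext i j; simp [site, mul_assoc]

theorem site_mul_sub_mul_site {x y : Fin n} (h : x ≠ y) (a b c : M2) :
    site x a * (site x b * site y c) - site x b * site y c * site x a
      = site x (a * b - b * a) * site y c := by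
  rw [mul_assoc (site x b), (site_commute h.symm c a).eq, ← mul_assoc, ← mul_assoc,
    site_mul_site, site_mul_site, ← sub_mul, site_sub]

theorem site_mul_mul_site {x y : Fin n} (h : x ≠ y) (p a b q : M2) :
    site x p * (site x a * site y b) * site x q = site x (p * a * q) * site y b := by
  rw [mul_assoc, mul_assoc, (site_commute h.symm b q).eq, ← mul_assoc, ← mul_assoc,
    site_mul_site, site_mul_site]

end Site

theorem σp_eq : σp = !![0, 1; 0, 0] := by
  ext i j; fin_cases i <;> fin_cases j <;> norm_num [σp, σx, σy]

theorem σm_eq : σm = !![0, 0; 1, 0] := by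
  ext i j; fin_cases i <;> fin_cases j <;> norm_num [σm, σx, σy]

theorem σp_mul_σp : σp * σp = 0 := by
  rw [σp_eq]; ext i j; fin_cases i <;> fin_cases j <;> simp

theorem σp_mul_σm_mul_σp : σp * σm * σp = σp := by
  rw [σp_eq, σm_eq]; ext i j; fin_cases i <;> fin_cases j <;> simp

theorem σp_mul_σz_mul_σp : σp * σz * σp = 0 := by
  rw [σp_eq, σz]; ext i j; fin_cases i <;> fin_cases j <;> simp

theorem σz_mul_σz : σz * σz = 1 := by
  rw [σz]; ext i j; fin_cases i <;> fin_cases j <;> simp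

theorem σp_mul_σm_sub_σm_mul_σp : σp * σm - σm * σp = σz := by
  rw [σp_eq, σm_eq, σz]; ext i j; fin_cases i <;> fin_cases j <;> simp

theorem σz_mul_σp_sub_σp_mul_σz : σz * σp - σp * σz = (2 : ℂ) • σp := by
  rw [σp_eq, σz]; ext i j; fin_cases i <;> fin_cases j <;> norm_num [mul_fin_two]

theorem σz_mul_σm_sub_σm_mul_σz : σz * σm - σm * σz = -((2 : ℂ) • σm) := by
  rw [σm_eq, σz]; ext i j; fin_cases i <;> fin_cases j <;> norm_num [mul_fin_two]

section Hamiltonian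

variable {n : ℕ}

def bondXXZ (Δ : ℂ) (x y : Fin n) : ChainOp n :=
  (2 : ℂ) • (site x σp * site y σm) + (2 : ℂ) • (site x σm * site y σp) + Δ • (site x σz * site y σz)

/-- The bond from `x` to `x + 1`, and `0` when `x` is the last site. -/
def bondTermXXZ (Δ : ℂ) (x : Fin n) : ChainOp n :=
  if h : (x : ℕ) + 1 < n then bondXXZ Δ x ⟨x + 1, h⟩ else 0

theorem XXZ_eq_sum_bondTermXXZ (Δ : ℂ) (n : ℕ) : XXZ Δ n = ∑ x : Fin n, bondTermXXZ Δ x := rfl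

theorem bondTermXXZ_eq {x y : Fin n} (hxy : (x : ℕ) + 1 = y) (Δ : ℂ) :
    bondTermXXZ Δ x = bondXXZ Δ x y := by
  rw [bondTermXXZ, dif_pos (hxy ▸ y.isLt)]
  congr

theorem commute_site_bondXXZ {u x y : Fin n} (hx : u ≠ x) (hy : u ≠ y) (Δ : ℂ) (c : M2) :
    Commute (site u c) (bondXXZ Δ x y) := by
  have h : ∀ a b, Commute (site u c) (site x a * site y b) := fun a b =>
    (site_commute hx c a).mul_right (site_commute hy c b)
  exact (((h _ _).smul_right _).add_right ((h _ _).smul_right _)).add_right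
    ((h _ _).smul_right _)

theorem commute_site_bondTermXXZ {u x : Fin n} (hx : u ≠ x) (hy : (x : ℕ) + 1 ≠ u) (Δ : ℂ)
    (c : M2) : Commute (site u c) (bondTermXXZ Δ x) := by
  rw [bondTermXXZ]
  split_ifs with h
  · exact commute_site_bondXXZ hx (fun e => hy (congrArg Fin.val e).symm) Δ c
  · exact Commute.zero_right _

theorem bondXXZ_comm {x y : Fin n} (h : x ≠ y) (Δ : ℂ) : bondXXZ Δ x y = bondXXZ Δ y x := by
  simp only [bondXXZ, (site_commute h _ _).eq]
  abel

theorem XXZ_mul_site_sub_site_mul_XXZ {x y : Fin n} (hx : (x : ℕ) = 0) (hxy : (x : ℕ) + 1 = y)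
    (Δ : ℂ) (c : M2) :
    XXZ Δ n * site x c - site x c * XXZ Δ n
      = bondXXZ Δ x y * site x c - site x c * bondXXZ Δ x y := by
  rw [XXZ_eq_sum_bondTermXXZ, Finset.sum_mul, Finset.mul_sum, ← Finset.sum_sub_distrib,
    Finset.sum_eq_single x, bondTermXXZ_eq hxy]
  · intro b _ hb
    rw [(commute_site_bondTermXXZ (Ne.symm hb) (by omega) Δ c).eq, sub_self]
  · simp

theorem site_mul_XXZ_mul_site {w u v : Fin n} (hwu : (w : ℕ) + 1 = u) (huv : (u : ℕ) + 1 = v)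
    (Δ : ℂ) {p : M2} (hp : p * p = 0) :
    site u p * XXZ Δ n * site u p
      = site u p * bondXXZ Δ w u * site u p + site u p * bondXXZ Δ u v * site u p := by
  have hwu' : w ≠ u := fun e => by rw [e] at hwu; omega
  rw [XXZ_eq_sum_bondTermXXZ, Finset.mul_sum, Finset.sum_mul,
    Finset.sum_eq_add w u hwu' _ (by simp) (by simp), bondTermXXZ_eq hwu, bondTermXXZ_eq huv]
  intro b _ ⟨hbw, hbu⟩
  have hfar : (b : ℕ) + 1 ≠ u := fun e => hbw (Fin.ext (by omega))
  rw [(commute_site_bondTermXXZ (Ne.symm hbu) hfar Δ p).eq, mul_assoc, site_mul_site, hp,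
    site_zero, mul_zero]

theorem bondXXZ_mul_site_σz_sub {x y : Fin n} (h : x ≠ y) (Δ : ℂ) :
    bondXXZ Δ x y * site x σz - site x σz * bondXXZ Δ x y
      = (4 : ℂ) • (site x σm * site y σp) - (4 : ℂ) • (site x σp * site y σm) := by
  have key := site_mul_sub_mul_site h σz
  calc _ = -((2 : ℂ) • (site x σz * (site x σp * site y σm) - site x σp * site y σm * site x σz)
          + (2 : ℂ) • (site x σz * (site x σm * site y σp) - site x σm * site y σp * site x σz)
          + Δ • (site x σz * (site x σz * site y σz) - site x σz * site y σz * site x σz)) := by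
        simp only [bondXXZ, mul_add, add_mul, mul_smul_comm, smul_mul_assoc, smul_sub]
        abel
    _ = _ := by
        simp only [key, σz_mul_σp_sub_σp_mul_σz, σz_mul_σm_sub_σm_mul_σz, sub_self, site_zero,
          site_neg, site_smul, smul_mul_assoc, neg_mul, zero_mul]
        module

theorem site_σp_mul_bondXXZ_mul_site_σp {x y : Fin n} (h : x ≠ y) (Δ : ℂ) :
    site x σp * bondXXZ Δ x y * site x σp = (2 : ℂ) • (site x σp * site y σp) := by
  simp only [bondXXZ, mul_add, add_mul, mul_smul_comm, smul_mul_assoc, site_mul_mul_site h,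
    σp_mul_σp, zero_mul, σp_mul_σm_mul_σp, σp_mul_σz_mul_σp, site_zero, smul_zero, add_zero,
    zero_add]

theorem site_σp_eq_commutator_site_σp_commutator_XXZ {x y : Fin n} (hx : (x : ℕ) = 0)
    (hxy : (x : ℕ) + 1 = y) (Δ : ℂ) :
    site y σp = (1/4 : ℂ) •
      (site x σz * (site x σp * (XXZ Δ n * site x σz - site x σz * XXZ Δ n)
        - (XXZ Δ n * site x σz - site x σz * XXZ Δ n) * site x σp)) := by
  have hne : x ≠ y := fun e => by rw [e] at hxy; omega
  have comm := site_mul_sub_mul_site hne σp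
  rw [XXZ_mul_site_sub_site_mul_XXZ hx hxy, bondXXZ_mul_site_σz_sub hne]
  calc site y σp = (1/4 : ℂ) • (4 : ℂ) • (site x σz * (site x (σp * σm - σm * σp) * site y σp)
        - site x σz * (site x (σp * σp - σp * σp) * site y σm)) := by
        rw [σp_mul_σm_sub_σm_mul_σp, sub_self, site_zero, zero_mul, mul_zero, sub_zero,
          ← mul_assoc, site_mul_site, σz_mul_σz, site_one, one_mul, smul_smul]
        norm_num
    _ = _ := by
        rw [← comm, ← comm]
        simp only [mul_sub, sub_mul, mul_smul_comm, smul_mul_assoc]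
        module

theorem site_σp_eq_neg_sub_commutator_site_σp_XXZ_site_σp {w u v : Fin n}
    (hwu : (w : ℕ) + 1 = u) (huv : (u : ℕ) + 1 = v) (Δ : ℂ) :
    site v σp = -site w σp - (1/2 : ℂ) •
      (site u σz * (site u σm * (site u σp * XXZ Δ n * site u σp)
        - (site u σp * XXZ Δ n * site u σp) * site u σm)) := by
  have huw : u ≠ w := fun e => by rw [e] at hwu; omega
  have huv' : u ≠ v := fun e => by rw [e] at huv; omega
  rw [site_mul_XXZ_mul_site hwu huv Δ σp_mul_σp, bondXXZ_comm huw.symm,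
    site_σp_mul_bondXXZ_mul_site_σp huw, site_σp_mul_bondXXZ_mul_site_σp huv']
  have hσ : σm * σp - σp * σm = -σz := by rw [← neg_sub, σp_mul_σm_sub_σm_mul_σp]
  calc site v σp = -site w σp - (1/2 : ℂ) • (2 : ℂ) •
        (site u σz * (site u (σm * σp - σp * σm) * site w σp)
          + site u σz * (site u (σm * σp - σp * σm) * site v σp)) := by
        simp only [hσ, site_neg, neg_mul, mul_neg, ← mul_assoc, site_mul_site, σz_mul_σz,
          site_one, one_mul, smul_smul]
        norm_num
    _ = _ := by
        rw [← site_mul_sub_mul_site huw, ← site_mul_sub_mul_site huv']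
        simp only [mul_add, add_mul, mul_sub, mul_smul_comm, smul_mul_assoc]
        module

end Hamiltonian

/-- recursive operator identities generating `σ⁺ₓ` from `H` and `σ⁺₁`.
Sites are numbered `1,…,n` in the informal statement; here site `x` corresponds to the
index `x-1 : Fin n`. -/
theorem stmt1 (n : ℕ) (hn : 2 ≤ n) (Δ : ℂ) :
    (site (⟨1, by omega⟩ : Fin n) σp
      = (1/4 : ℂ) •
          (site (⟨0, by omega⟩ : Fin n) σz *
            (site (⟨0, by omega⟩ : Fin n) σp *
                (XXZ Δ n * site (⟨0, by omega⟩ : Fin n) σz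
                  - site (⟨0, by omega⟩ : Fin n) σz * XXZ Δ n)
              - (XXZ Δ n * site (⟨0, by omega⟩ : Fin n) σz
                  - site (⟨0, by omega⟩ : Fin n) σz * XXZ Δ n) *
                site (⟨0, by omega⟩ : Fin n) σp)))
    ∧ (∀ x : ℕ, ∀ _hx3 : 3 ≤ x, ∀ _hxn : x ≤ n,
        site (⟨x-1, by omega⟩ : Fin n) σp
          = -site (⟨x-3, by omega⟩ : Fin n) σp
            - (1/2 : ℂ) •
              (site (⟨x-2, by omega⟩ : Fin n) σz *
                (site (⟨x-2, by omega⟩ : Fin n) σm *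
                    (site (⟨x-2, by omega⟩ : Fin n) σp * XXZ Δ n *
                      site (⟨x-2, by omega⟩ : Fin n) σp)
                  - (site (⟨x-2, by omega⟩ : Fin n) σp * XXZ Δ n *
                      site (⟨x-2, by omega⟩ : Fin n) σp) *
                    site (⟨x-2, by omega⟩ : Fin n) σm))) :=
  ⟨site_σp_eq_commutator_site_σp_commutator_XXZ rfl rfl Δ, fun x hx3 _ =>
    site_σp_eq_neg_sub_commutator_site_σp_XXZ_site_σp (by simp only; omega) (by simp only; omega)
      Δ⟩
end
end

section
/- Let η ∈ ℂ, Δ = cos η, h the XXZ interaction on ℂ²⊗ℂ², and define the 4×4 matrix R(φ) = (sin φ/2)·(h + cos η·1₄) − ((1+cos φ)/2)·sin η·1₄ + ((1−cos φ)/2)·sin η·(σᶻ⊗σᶻ) for φ ∈ ℂ. Then: (a) R(φ)ᵀ = R(φ) for all φ; (b) the derivative of φ ↦ R(φ) at φ = 0 equals (1/2)(h + cos η·1₄); (c) R(φ)·R(−φ) = (sin²η − sin²φ)·1₄ for all φ. -/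
open Matrix Kronecker

noncomputable section

abbrev M4 : Type := Matrix (Fin 2 × Fin 2) (Fin 2 × Fin 2) ℂ

/-- The XXZ interaction `h = 2σ⁺⊗σ⁻ + 2σ⁻⊗σ⁺ + Δ σᶻ⊗σᶻ`. -/
def hXXZ (Δ : ℂ) : M4 := (2:ℂ) • (σp ⊗ₖ σm) + (2:ℂ) • (σm ⊗ₖ σp) + Δ • (σz ⊗ₖ σz)

/-- The six-vertex R-matrix in the parametrization of the review. -/
def Rmat (η φ : ℂ) : M4 :=
  (Complex.sin φ / 2) • (hXXZ (Complex.cos η) + Complex.cos η • (1 : M4))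
    - ((1 + Complex.cos φ) / 2 * Complex.sin η) • (1 : M4)
    + ((1 - Complex.cos φ) / 2 * Complex.sin η) • (σz ⊗ₖ σz)

/-! In the spin basis, `R(φ)` is a six-vertex matrix with weights `a = sin (φ - η)` on `|↑↑⟩, |↓↓⟩`,
`b = -sin η` on `|↑↓⟩, |↓↑⟩` and `c = sin φ` for the exchange `|↑↓⟩ ↔ |↓↑⟩`. Such matrices are
symmetric and multiply by `(a, b, c) * (a', b', c') = (a a', b b' + c c', b c' + c b')`, so
`R(φ) R(-φ)` has weights `(sin (φ - η) sin (-φ - η), sin² η - sin² φ, 0)`, and the first weight equals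
the second by the addition formula for `sin`. The derivative is read off weight by weight. -/

def sixVertex (a b c : ℂ) : M4 :=
  Matrix.of fun x y => if x = y then (if x.1 = x.2 then a else b) else if x = y.swap then c else 0

section sixVertex

variable (a b c a' b' c' : ℂ)

lemma sixVertex_transpose : (sixVertex a b c)ᵀ = sixVertex a b c := by
  ext ⟨i, j⟩ ⟨k, l⟩
  fin_cases i <;> fin_cases j <;> fin_cases k <;> fin_cases l <;> simp [sixVertex]

lemma sixVertex_mul :
    sixVertex a b c * sixVertex a' b' c' = sixVertex (a * a') (b * b' + c * c') (b * c' + c * b') := by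
  ext ⟨i, j⟩ ⟨k, l⟩
  fin_cases i <;> fin_cases j <;> fin_cases k <;> fin_cases l <;>
    simp [sixVertex, mul_apply, Fintype.sum_prod_type, Fin.sum_univ_two] <;> ring

lemma sixVertex_add :
    sixVertex a b c + sixVertex a' b' c' = sixVertex (a + a') (b + b') (c + c') := by
  ext x y
  simp only [sixVertex, Matrix.add_apply, of_apply]
  split_ifs <;> ring

lemma sixVertex_sub :
    sixVertex a b c - sixVertex a' b' c' = sixVertex (a - a') (b - b') (c - c') := by
  ext x y
  simp only [sixVertex, Matrix.sub_apply, of_apply]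
  split_ifs <;> ring

lemma smul_sixVertex (r : ℂ) : r • sixVertex a b c = sixVertex (r * a) (r * b) (r * c) := by
  ext x y
  simp only [sixVertex, Matrix.smul_apply, of_apply, smul_eq_mul]
  split_ifs <;> ring

lemma sixVertex_self_zero : sixVertex a a 0 = a • (1 : M4) := by
  ext x y
  simp only [sixVertex, Matrix.smul_apply, of_apply, Matrix.one_apply, smul_eq_mul]
  split_ifs <;> simp_all

lemma hasDerivAt_sixVertex_apply {f g k : ℂ → ℂ} {f' g' k' z : ℂ} (hf : HasDerivAt f f' z)
    (hg : HasDerivAt g g' z) (hk : HasDerivAt k k' z) (x y : Fin 2 × Fin 2) :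
    HasDerivAt (fun w => sixVertex (f w) (g w) (k w) x y) (sixVertex f' g' k' x y) z := by
  simp only [sixVertex, of_apply]
  split_ifs
  exacts [hf, hg, hk, hasDerivAt_const z 0]

end sixVertex

lemma one_eq_sixVertex : (1 : M4) = sixVertex 1 1 0 := by
  rw [sixVertex_self_zero, one_smul]

lemma σz_kronecker_σz_eq_sixVertex : σz ⊗ₖ σz = sixVertex 1 (-1) 0 := by
  ext ⟨i, j⟩ ⟨k, l⟩
  fin_cases i <;> fin_cases j <;> fin_cases k <;> fin_cases l <;> simp [sixVertex, σz]

lemma hXXZ_eq_sixVertex (Δ : ℂ) : hXXZ Δ = sixVertex Δ (-Δ) 2 := by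
  ext ⟨i, j⟩ ⟨k, l⟩
  fin_cases i <;> fin_cases j <;> fin_cases k <;> fin_cases l <;>
    simp [sixVertex, hXXZ, σp, σm, σx, σy, σz] <;> ring_nf

lemma Rmat_eq_sixVertex (η φ : ℂ) :
    Rmat η φ = sixVertex (Complex.sin (φ - η)) (-Complex.sin η) (Complex.sin φ) := by
  rw [Rmat, hXXZ_eq_sixVertex, σz_kronecker_σz_eq_sixVertex, one_eq_sixVertex, Complex.sin_sub]
  simp only [smul_sixVertex, sixVertex_add, sixVertex_sub]
  congr 1 <;> ring

lemma Complex.sin_sub_mul_sin_neg_sub (x y : ℂ) :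
    Complex.sin (x - y) * Complex.sin (-x - y) = Complex.sin y ^ 2 - Complex.sin x ^ 2 := by
  rw [Complex.sin_sub, Complex.sin_sub, Complex.sin_neg, Complex.cos_neg]
  linear_combination Complex.sin y ^ 2 * Complex.sin_sq_add_cos_sq x
    - Complex.sin x ^ 2 * Complex.sin_sq_add_cos_sq y

/-- symmetry, derivative at `0`, and the inversion identity for `R(φ)`. -/
theorem stmt5 (η : ℂ) :
    (∀ φ : ℂ, (Rmat η φ)ᵀ = Rmat η φ)
    ∧ (∀ i j : Fin 2 × Fin 2,
        HasDerivAt (fun φ : ℂ => Rmat η φ i j)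
          (((1/2 : ℂ) • (hXXZ (Complex.cos η) + Complex.cos η • (1 : M4))) i j) 0)
    ∧ (∀ φ : ℂ, Rmat η φ * Rmat η (-φ) = (Complex.sin η ^ 2 - Complex.sin φ ^ 2) • (1 : M4)) := by
  refine ⟨fun φ => by rw [Rmat_eq_sixVertex, sixVertex_transpose], fun i j => ?_, fun φ => ?_⟩
  · have hderiv : (1/2 : ℂ) • (hXXZ (Complex.cos η) + Complex.cos η • (1 : M4))
        = sixVertex (Complex.cos (0 - η) * 1) 0 (Complex.cos 0) := by
      rw [hXXZ_eq_sixVertex, one_eq_sixVertex, zero_sub, Complex.cos_neg, Complex.cos_zero]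
      simp only [smul_sixVertex, sixVertex_add]
      congr 1 <;> ring
    simp only [Rmat_eq_sixVertex, hderiv]
    exact hasDerivAt_sixVertex_apply (((Complex.hasDerivAt_sin _).comp _
      ((hasDerivAt_id 0).sub_const η))) (hasDerivAt_const _ _) (Complex.hasDerivAt_sin 0) i j
  · rw [Rmat_eq_sixVertex, Rmat_eq_sixVertex, sixVertex_mul, Complex.sin_sub_mul_sin_neg_sub,
      Complex.sin_neg, ← sixVertex_self_zero]
    congr 1 <;> ring

end
end

section
/- Let η, s, φ ∈ ℂ with sin η ≠ 0 and let L(φ,s) = Σ_{α∈{0,z,+,−}} L^α(φ,s)⊗σ^α be the Lax operator on V⊗ℂ². Define the partial transpose in the physical space L^T(φ,s) = Σ_α L^α(φ,s)⊗(σ^α)ᵀ. Then (1_V ⊗ σˣ)·L(φ,s)·(1_V ⊗ σˣ) = L^T(π−φ, s), i.e. the Lax operator is invariant under the combined spin reversal in the physical space and replacement φ ↦ π−φ with transposition. -/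
/-!
Conjugation by `1 ⊗ σˣ` acts only on the auxiliary factor: it fixes `σ⁰`, swaps `σ⁺ ↔ σ⁻` and
negates `σᶻ`, which is the transpose of each `σ^α` except for the sign on `σᶻ`. That sign is
absorbed by `cos (π - φ) = -cos φ`, while `sin (π - φ) = sin φ` leaves the `σ⁰` term unchanged.
-/

open Matrix

noncomputable section

/-- The Verma module: finitely supported sequences, with basis `|k⟩ = single k 1`. -/
abbrev Vsp : Type := ℕ →₀ ℂ

/-- Endomorphisms of the Verma module. -/
abbrev VOp : Type := Module.End ℂ Vsp

/-- The endomorphism sending the basis vector `|k⟩` to `v k`. -/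
def mkOp (v : ℕ → Vsp) : VOp :=
  Finsupp.lsum ℂ (fun k => LinearMap.toSpanSingleton ℂ Vsp (v k))

/-- Diagonal operator `|k⟩ ↦ d k • |k⟩`. -/
def diagOp (d : ℕ → ℂ) : VOp := mkOp fun k => Finsupp.single k (d k)

/-- `s⁺_s |k⟩ = (sin(kη)/sin η)|k−1⟩`, with `s⁺_s |0⟩ = 0`. -/
def spOp (η : ℂ) : VOp :=
  mkOp fun k => if k = 0 then 0
    else Finsupp.single (k-1) (Complex.sin ((k:ℂ) * η) / Complex.sin η)

/-- `s⁻_s |k⟩ = (sin((2s−k)η)/sin η)|k+1⟩`. -/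
def smOp (η s : ℂ) : VOp :=
  mkOp fun k => Finsupp.single (k+1) (Complex.sin ((2*s - (k:ℂ)) * η) / Complex.sin η)

/-- The diagonal operator `cos(η s^z_s) : |k⟩ ↦ cos(η(s−k))|k⟩`. -/
def cosSz (η s : ℂ) : VOp := diagOp fun k => Complex.cos (η * (s - (k:ℂ)))

/-- The diagonal operator `sin(η s^z_s) : |k⟩ ↦ sin(η(s−k))|k⟩`. -/
def sinSz (η s : ℂ) : VOp := diagOp fun k => Complex.sin (η * (s - (k:ℂ)))

/-- Operators on `V ⊗ ℂ²`, realized as 2×2 matrices with entries in `End V`. -/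
abbrev LaxOp : Type := Matrix (Fin 2) (Fin 2) VOp

/-- `A ⊗ a` for `A : End V` and a 2×2 matrix `a`. -/
def tensV (A : VOp) (a : M2) : LaxOp := Matrix.of fun i j => a i j • A

/-- The Lax operator `L(φ,s) = Σ_α L^α(φ,s) ⊗ σ^α`. -/
def Lax (η s φ : ℂ) : LaxOp :=
  tensV (Complex.sin φ • cosSz η s) σ0 + tensV (Complex.cos φ • sinSz η s) σz
    + tensV (Complex.sin η • smOp η s) σp + tensV (Complex.sin η • spOp η) σm

/-- The partial transpose `L^T(φ,s) = Σ_α L^α(φ,s) ⊗ (σ^α)ᵀ`. -/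
def LaxT (η s φ : ℂ) : LaxOp :=
  tensV (Complex.sin φ • cosSz η s) σ0ᵀ + tensV (Complex.cos φ • sinSz η s) σzᵀ
    + tensV (Complex.sin η • smOp η s) σpᵀ + tensV (Complex.sin η • spOp η) σmᵀ

lemma tensV_mul_tensV (A B : VOp) (a b : M2) : tensV A a * tensV B b = tensV (A * B) (a * b) := by
  ext i j : 1
  simp only [tensV, Matrix.mul_apply, Matrix.of_apply, Finset.sum_smul, smul_mul_smul_comm]

lemma tensV_smul_neg (c : ℂ) (A : VOp) (a : M2) : tensV (c • A) (-a) = tensV ((-c) • A) a := by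
  ext i j : 1
  simp only [tensV, Matrix.of_apply, Matrix.neg_apply, smul_smul]
  ring_nf

lemma tensV_one_conj (A : VOp) (a b : M2) :
    tensV 1 b * tensV A a * tensV 1 b = tensV A (b * a * b) := by
  rw [tensV_mul_tensV, tensV_mul_tensV, one_mul, mul_one]

lemma σx_mul_σ0_mul_σx : σx * σ0 * σx = σ0ᵀ := by
  ext i j; fin_cases i <;> fin_cases j <;> simp [σx, σ0]

lemma σx_mul_σz_mul_σx : σx * σz * σx = -σzᵀ := by
  ext i j; fin_cases i <;> fin_cases j <;> simp [σx, σz]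

lemma σx_mul_σp_mul_σx : σx * σp * σx = σpᵀ := by
  ext i j; fin_cases i <;> fin_cases j <;> simp [σx, σy, σp]

lemma σx_mul_σm_mul_σx : σx * σm * σx = σmᵀ := by
  ext i j; fin_cases i <;> fin_cases j <;> simp [σx, σy, σm]

theorem stmt6_general (η s φ : ℂ) :
    tensV (1 : VOp) σx * Lax η s φ * tensV (1 : VOp) σx = LaxT η s ((Real.pi : ℂ) - φ) := by
  simp only [Lax, LaxT, Matrix.mul_add, Matrix.add_mul, tensV_one_conj, σx_mul_σ0_mul_σx,
    σx_mul_σz_mul_σx, σx_mul_σp_mul_σx, σx_mul_σm_mul_σx, tensV_smul_neg, Complex.sin_pi_sub,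
    Complex.cos_pi_sub]

/-- `(1⊗σˣ)·L(φ,s)·(1⊗σˣ) = L^T(π−φ,s)`. -/
theorem stmt6 (η s φ : ℂ) (hη : Complex.sin η ≠ 0) :
    tensV (1 : VOp) σx * Lax η s φ * tensV (1 : VOp) σx = LaxT η s ((Real.pi : ℂ) - φ) :=
  stmt6_general η s φ

end
end

section
/- Let l, m be coprime positive integers with m ≥ 2, set η = πl/m, c_k = cos(kη), s_k = sin(kη), and let φ, φ' ∈ ℂ with sin φ · sin φ' ≠ 0 and sin(m(φ+φ')) ≠ 0. Define the (m−1)×(m−1) tridiagonal matrix T(φ,φ') with rows and columns indexed by k ∈ {1,…,m−1}: T_{k,k} = c_k² + cot φ · cot φ' · s_k², T_{k,k+1} = T_{k+1,k} = |s_k·s_{k+1}|/(2 sin φ sin φ') for 1 ≤ k ≤ m−2, and all other entries zero. If 1 − T(φ,φ') is invertible, then the (1,1) entry of its inverse equals ((1 − T(φ,φ'))^{−1})_{1,1} = −2·sin φ·sin φ'·sin((m−1)(φ+φ')) / ( sin²(πl/m)·sin(m(φ+φ')) ). -/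
/-!
Write `ψ = φ + φ'` and `w_k = -s_k² / (2 sin φ sin φ')`. Since `c_k² = 1 - s_k²`, the matrix
`1 - T(φ,φ')` is tridiagonal with diagonal `2 w_k cos ψ` and off-diagonal entries whose squares are
`w_k w_{k+1}`. The three-term recurrence of its leading principal minors (continuants) is then the
recurrence of the Chebyshev polynomials `U_n` scaled by `w_1 ⋯ w_n`, so by
`U_n(cos ψ) sin ψ = sin((n+1)ψ)` the determinant of such an `n × n` matrix is
`w_1 ⋯ w_n · sin((n+1)ψ) / sin ψ`. The `(1,1)` entry of the inverse is the ratio of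
the determinant with the first row and column removed (a matrix of the same shape, shifted by one)
to the full determinant; everything cancels except `w_1` and the two sines.
-/

open Matrix

noncomputable section

/-- `c_k = cos(k π l / m)`. -/
def ck (l m k : ℕ) : ℝ := Real.cos ((k:ℝ) * (Real.pi * (l:ℝ) / (m:ℝ)))

/-- `s_k = sin(k π l / m)`. -/
def sk (l m k : ℕ) : ℝ := Real.sin ((k:ℝ) * (Real.pi * (l:ℝ) / (m:ℝ)))

open Complex Polynomial.Chebyshev

section

variable {R : Type*} [CommRing R]

def tridiag (a b : ℕ → R) (n : ℕ) : Matrix (Fin n) (Fin n) R :=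
  of fun i j =>
    if i = j then a i
    else if (i : ℕ) + 1 = j ∨ (j : ℕ) + 1 = i then b (min i j)
    else 0

def continuant (a c : ℕ → R) : ℕ → R
  | 0 => 1
  | 1 => a 0
  | n + 2 => a (n + 1) * continuant a c (n + 1) - c n * continuant a c n

theorem continuant_eq_prod_mul_eval_U (a c w : ℕ → R) (x : R) (ha : ∀ k, a k = 2 * w k * x)
    (hc : ∀ k, c k = w k * w (k + 1)) :
    ∀ n : ℕ, continuant a c n = (∏ k ∈ Finset.range n, w k) * (U R n).eval x
  | 0 => by simp [continuant]
  | 1 => by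
    rw [continuant, ha, Finset.prod_range_one, Nat.cast_one, U_one, Polynomial.eval_mul,
      Polynomial.eval_ofNat, Polynomial.eval_X]
    ring
  | n + 2 => by
    rw [continuant, continuant_eq_prod_mul_eval_U a c w x ha hc (n + 1),
      continuant_eq_prod_mul_eval_U a c w x ha hc n, ha, hc]
    push_cast
    rw [U_add_two]
    simp only [Finset.prod_range_succ, Polynomial.eval_sub, Polynomial.eval_mul,
      Polynomial.eval_X, Polynomial.eval_ofNat]
    ring

end

theorem Matrix.inv_apply_zero_zero {K : Type*} [Field K] {n : ℕ}
    (A : Matrix (Fin (n + 1)) (Fin (n + 1)) K) :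
    A⁻¹ 0 0 = (A.submatrix Fin.succ Fin.succ).det / A.det := by
  rw [inv_def, smul_apply, adjugate_fin_succ_eq_det_submatrix, Ring.inverse_eq_inv', smul_eq_mul]
  simp [div_eq_inv_mul]

namespace tridiag

section

variable {R : Type*} [CommRing R] (a b : ℕ → R)

theorem one_sub (n : ℕ) : 1 - tridiag a b n = tridiag (fun k => 1 - a k) (fun k => -b k) n := by
  ext i j
  simp only [tridiag, Matrix.sub_apply, Matrix.one_apply, of_apply]
  split_ifs <;> simp

theorem apply_eq_zero {n : ℕ} {i j : Fin n} (h : (i : ℕ) + 1 < j ∨ (j : ℕ) + 1 < i) :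
    tridiag a b n i j = 0 := by
  simp only [tridiag, of_apply, Fin.ext_iff]
  split_ifs <;> first | rfl | omega

theorem submatrix_castSucc (n : ℕ) :
    (tridiag a b (n + 1)).submatrix Fin.castSucc Fin.castSucc = tridiag a b n := by
  ext i j
  simp [tridiag, Fin.ext_iff]

theorem submatrix_succ (n : ℕ) :
    (tridiag a b (n + 1)).submatrix Fin.succ Fin.succ
      = tridiag (fun k => a (k + 1)) (fun k => b (k + 1)) n := by
  ext i j
  simp only [tridiag, submatrix_apply, of_apply, Fin.succ_inj, Fin.val_succ]
  split_ifs <;> first | rfl | omega | (congr 1; omega)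

theorem det_eq_continuant : ∀ n : ℕ, (tridiag a b n).det = continuant a (b ^ 2) n
  | 0 => by simp [continuant]
  | 1 => by simp [continuant, tridiag]
  | n + 2 => by
    -- Expand along the last row; the second minor has the single entry `b n` in its last column.
    have hcol (k : Fin n) : (Fin.last n).castSucc.succAbove k.castSucc = k.castSucc.castSucc :=
      Fin.succAbove_castSucc_of_lt _ _ k.castSucc_lt_last
    have minor : ((tridiag a b (n + 2)).submatrix Fin.castSucc
        (Fin.last n).castSucc.succAbove).det = b n * (tridiag a b n).det := by
      rw [det_succ_column _ (Fin.last _), Fin.sum_univ_castSucc,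
        Finset.sum_eq_zero fun k _ => by
          rw [submatrix_apply, Fin.succAbove_castSucc_self, Fin.succ_last,
            apply_eq_zero a b (by simp), mul_zero, zero_mul],
        Fin.succAbove_last, submatrix_submatrix,
        show (Fin.last n).castSucc.succAbove ∘ Fin.castSucc = Fin.castSucc ∘ Fin.castSucc from
          funext hcol, ← submatrix_submatrix, submatrix_castSucc, submatrix_castSucc,
        Fin.val_last, Even.neg_one_pow ⟨n, rfl⟩]
      simp [tridiag, Fin.ext_iff]
    rw [det_succ_row _ (Fin.last _), Fin.sum_univ_castSucc, Fin.sum_univ_castSucc,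
      Finset.sum_eq_zero fun k _ => by rw [apply_eq_zero a b (by simp), mul_zero, zero_mul]]
    have hdiag : tridiag a b (n + 2) (Fin.last _) (Fin.last _) = a (n + 1) := by simp [tridiag]
    have hsub : tridiag a b (n + 2) (Fin.last _) (Fin.last n).castSucc = b n := by
      simp [tridiag, Fin.ext_iff]
    rw [zero_add, Fin.succAbove_last, submatrix_castSucc, minor, hdiag, hsub, det_eq_continuant n,
      det_eq_continuant (n + 1), Fin.val_castSucc, Fin.val_last, Fin.val_last,
      Odd.neg_one_pow ⟨n, by ring⟩, Even.neg_one_pow ⟨n + 1, rfl⟩, continuant, Pi.pow_apply]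
    ring

end

section

variable {a b w : ℕ → ℂ} {ψ : ℂ}

theorem det_mul_sin (ha : ∀ k, a k = 2 * w k * cos ψ) (hb : ∀ k, b k ^ 2 = w k * w (k + 1))
    (n : ℕ) : (tridiag a b n).det * sin ψ = (∏ k ∈ Finset.range n, w k) * sin ((n + 1) * ψ) := by
  rw [det_eq_continuant, continuant_eq_prod_mul_eval_U a (b ^ 2) w _ ha hb, mul_assoc,
    U_complex_cos]
  push_cast
  rfl

theorem inv_apply_zero_zero (ha : ∀ k, a k = 2 * w k * cos ψ)
    (hb : ∀ k, b k ^ 2 = w k * w (k + 1)) (hψ : sin ψ ≠ 0) {n : ℕ}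
    (hA : IsUnit (tridiag a b (n + 1)).det) :
    (tridiag a b (n + 1))⁻¹ 0 0 = sin ((n + 1) * ψ) / (w 0 * sin ((n + 2) * ψ)) := by
  have hdet := det_mul_sin ha hb (n + 1)
  have hminor := det_mul_sin (fun k => ha (k + 1)) (fun k => hb (k + 1)) n
  rw [Finset.prod_range_succ', show ((n + 1 : ℕ) : ℂ) + 1 = n + 2 by push_cast; ring] at hdet
  have hne : (∏ k ∈ Finset.range n, w (k + 1)) * w 0 * sin ((n + 2) * ψ) ≠ 0 :=
    hdet ▸ mul_ne_zero hA.ne_zero hψ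
  rw [Matrix.inv_apply_zero_zero, submatrix_succ,
    div_eq_div_iff hA.ne_zero (by rw [mul_assoc] at hne; exact right_ne_zero_of_mul hne)]
  apply mul_right_cancel₀ hψ
  linear_combination (w 0 * sin ((n + 2) * ψ)) * hminor - sin ((n + 1) * ψ) * hdet

end

end tridiag

section transfer

variable (l m : ℕ) (φ φ' : ℂ)

-- The index `k` is `0`-based: it stands for the paper's `k + 1`.

def transferDiag (k : ℕ) : ℂ :=
  ((ck l m (k + 1) : ℝ) : ℂ) ^ 2
    + (cos φ / sin φ) * (cos φ' / sin φ') * ((sk l m (k + 1) : ℝ) : ℂ) ^ 2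

def transferOffDiag (k : ℕ) : ℂ :=
  ((|sk l m (k + 1) * sk l m (k + 2)| : ℝ) : ℂ) / (2 * sin φ * sin φ')

def transferWeight (k : ℕ) : ℂ :=
  -((sk l m (k + 1) : ℝ) : ℂ) ^ 2 / (2 * (sin φ * sin φ'))

variable {φ φ'} in
theorem one_sub_transferDiag (hφ : sin φ ≠ 0) (hφ' : sin φ' ≠ 0) (k : ℕ) :
    1 - transferDiag l m φ φ' k = 2 * transferWeight l m φ φ' k * cos (φ + φ') := by
  have hcs : ((ck l m (k + 1) : ℝ) : ℂ) ^ 2 = 1 - ((sk l m (k + 1) : ℝ) : ℂ) ^ 2 := by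
    rw [eq_sub_iff_add_eq, ← ofReal_pow, ← ofReal_pow, ← ofReal_add, ck, sk, Real.cos_sq_add_sin_sq,
      ofReal_one]
  rw [transferDiag, transferWeight, hcs, cos_add]
  field_simp
  ring

theorem neg_transferOffDiag_sq (k : ℕ) :
    (-transferOffDiag l m φ φ' k) ^ 2
      = transferWeight l m φ φ' k * transferWeight l m φ φ' (k + 1) := by
  rw [transferOffDiag, transferWeight, transferWeight, neg_sq, div_pow, ← ofReal_pow, sq_abs]
  push_cast
  ring

end transfer

/-- the (1,1) entry of the inverse of `1 − T(φ,φ')` for the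
tridiagonal transfer matrix of the gapless XXZ chain at `η = πl/m`. -/
theorem stmt13 (l m : ℕ) (hm : 2 ≤ m)
    (φ φ' : ℂ) (hφ : Complex.sin φ * Complex.sin φ' ≠ 0)
    (hden : Complex.sin ((m:ℂ) * (φ + φ')) ≠ 0)
    (T : Matrix (Fin (m-1)) (Fin (m-1)) ℂ)
    (hT : T = Matrix.of fun (i j : Fin (m-1)) =>
      if i = j then
        ((ck l m ((i:ℕ)+1) : ℝ) : ℂ)^2
          + (Complex.cos φ / Complex.sin φ) * (Complex.cos φ' / Complex.sin φ')
            * ((sk l m ((i:ℕ)+1) : ℝ) : ℂ)^2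
      else if (i:ℕ)+1 = (j:ℕ) ∨ (j:ℕ)+1 = (i:ℕ) then
        ((|sk l m (min (i:ℕ) (j:ℕ) + 1) * sk l m (min (i:ℕ) (j:ℕ) + 2)| : ℝ) : ℂ)
          / (2 * Complex.sin φ * Complex.sin φ')
      else 0)
    (hinv : IsUnit (1 - T)) :
    (1 - T)⁻¹ ⟨0, by omega⟩ ⟨0, by omega⟩
      = (-2) * Complex.sin φ * Complex.sin φ' * Complex.sin (((m:ℂ) - 1) * (φ + φ'))
        / (((sk l m 1 : ℝ) : ℂ)^2 * Complex.sin ((m:ℂ) * (φ + φ'))) := by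
  obtain ⟨n, rfl⟩ : ∃ n, m = n + 2 := ⟨m - 2, by omega⟩
  have hψ : sin (φ + φ') ≠ 0 := by
    refine right_ne_zero_of_mul (a := (U ℂ (n + 1 : ℕ)).eval (cos (φ + φ'))) ?_
    rw [U_complex_cos]
    push_cast at hden ⊢
    convert hden using 3
    ring
  have ha := one_sub_transferDiag l (n + 2) (left_ne_zero_of_mul hφ) (right_ne_zero_of_mul hφ)
  have hb := neg_transferOffDiag_sq l (n + 2) φ φ'
  set A := tridiag (transferDiag l (n + 2) φ φ') (transferOffDiag l (n + 2) φ φ') (n + 1)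
  subst hT
  -- `T` is `A` by unfolding, with `Fin (n + 2 - 1)` read as `Fin (n + 1)`.
  change IsUnit (1 - A) at hinv
  change (1 - A)⁻¹ 0 0 = _
  rw [tridiag.one_sub, isUnit_iff_isUnit_det] at hinv
  rw [tridiag.one_sub, tridiag.inv_apply_zero_zero ha hb hψ hinv, transferWeight]
  push_cast
  rw [div_mul_eq_mul_div, div_div_eq_mul_div, show (n : ℂ) + 2 - 1 = n + 1 by ring]
  ring

end
end
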